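/- For the 2-qubit Peres–Mermin square observables O_{jk} and any density matrix ρ on ℂ⁴, the quantity L(ρ) = |−Σ_{k} Tr(ρ O_{1k}O_{2k}O_{3k}) + Σ_j Tr(ρ O_{j1}O_{j2}O_{j3})| equals 6, independently of ρ. -/

import Mathlib

open Matrix
open scoped Kronecker ComplexOrder

namespace PeresMermin

noncomputable def σx : Matrix (Fin 2) (Fin 2) ℂ := !![0, 1; 1, 0]
noncomputable def σy : Matrix (Fin 2) (Fin 2) ℂ := !![0, -Complex.I; Complex.I, 0]
noncomputable def σz : Matrix (Fin 2) (Fin 2) ℂ := !![1, 0; 0, -1]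

/-- The nine 4×4 observables of the two-qubit Peres–Mermin square. -/
noncomputable def O : Fin 3 → Fin 3 → Matrix (Fin 2 × Fin 2) (Fin 2 × Fin 2) ℂ :=
  ![![σx ⊗ₖ 1, 1 ⊗ₖ σz, -(σx ⊗ₖ σz)],
    ![1 ⊗ₖ σx, σz ⊗ₖ 1, -(σz ⊗ₖ σx)],
    ![σx ⊗ₖ σx, σz ⊗ₖ σz, σy ⊗ₖ σy]]

/-! The Pauli matrices satisfy `σx² = σz² = 1` and `σy = i σx σz`, so by the mixed-product
property of `⊗ₖ` every column of the square multiplies to `1` and every row to `-1`.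
The six traces are then `±Tr ρ = ±1`, whatever the state. -/

lemma σx_mul_σx : σx * σx = 1 := by
  ext i j; fin_cases i <;> fin_cases j <;> simp [σx]

lemma σz_mul_σz : σz * σz = 1 := by
  ext i j; fin_cases i <;> fin_cases j <;> simp [σz]

lemma σx_mul_σz_mul_σy : σx * σz * σy = -Complex.I • 1 := by
  ext i j; fin_cases i <;> fin_cases j <;> simp [σx, σy, σz]

lemma σz_mul_σx_mul_σy : σz * σx * σy = Complex.I • 1 := by
  ext i j; fin_cases i <;> fin_cases j <;> simp [σx, σy, σz]

lemma kronecker_mul_kronecker_mul_kronecker {m n R : Type*} [Fintype m] [Fintype n]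
    [CommSemiring R] (A A' A'' : Matrix m m R) (B B' B'' : Matrix n n R) :
    (A ⊗ₖ B) * (A' ⊗ₖ B') * (A'' ⊗ₖ B'') = (A * A' * A'') ⊗ₖ (B * B' * B'') := by
  rw [mul_kronecker_mul, mul_kronecker_mul]

lemma O_col_prod (k : Fin 3) : O 0 k * O 1 k * O 2 k = 1 := by
  fin_cases k <;>
    simp only [O, Fin.zero_eta, Fin.mk_one, Fin.reduceFinMk, cons_val, neg_mul_neg,
      kronecker_mul_kronecker_mul_kronecker, Matrix.mul_one, Matrix.one_mul, σx_mul_σx, σz_mul_σz,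
      σx_mul_σz_mul_σy, σz_mul_σx_mul_σy, smul_kronecker, kronecker_smul, smul_smul,
      one_kronecker_one]
  simp

lemma O_row_prod (j : Fin 3) : O j 0 * O j 1 * O j 2 = -1 := by
  fin_cases j <;>
    simp only [O, Fin.zero_eta, Fin.mk_one, Fin.reduceFinMk, cons_val, Matrix.mul_neg,
      kronecker_mul_kronecker_mul_kronecker, Matrix.mul_one, Matrix.one_mul, σx_mul_σx, σz_mul_σz,
      σx_mul_σz_mul_σy, smul_kronecker, kronecker_smul, smul_smul, one_kronecker_one]
  simp

theorem state_independent_value_general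
    (ρ : Matrix (Fin 2 × Fin 2) (Fin 2 × Fin 2) ℂ)
    (htr : ρ.trace = 1) :
    ‖(-(∑ k : Fin 3, (ρ * (O 0 k * O 1 k * O 2 k)).trace)
        + ∑ j : Fin 3, (ρ * (O j 0 * O j 1 * O j 2)).trace)‖ = 6 := by
  simp only [O_col_prod, O_row_prod, Matrix.mul_one, Matrix.mul_neg, Matrix.trace_neg, htr,
    Finset.sum_const, Finset.card_univ]
  norm_num

/-- State independence of the Peres–Mermin value: for every density matrix `ρ`
on `ℂ⁴`, `L(ρ) = |−Σ_k Tr(ρ O₁ₖO₂ₖO₃ₖ) + Σ_j Tr(ρ Oⱼ₁Oⱼ₂Oⱼ₃)| = 6`. -/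
theorem state_independent_value
    (ρ : Matrix (Fin 2 × Fin 2) (Fin 2 × Fin 2) ℂ)
    (hρ : ρ.PosSemidef) (htr : ρ.trace = 1) :
    ‖(-(∑ k : Fin 3, (ρ * (O 0 k * O 1 k * O 2 k)).trace)
        + ∑ j : Fin 3, (ρ * (O j 0 * O j 1 * O j 2)).trace)‖ = 6 :=
  state_independent_value_general ρ htr

end PeresMermin
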